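/- arXiv:1210.5086 — 3 statements merged into one kernel-verified Lean document; each statement's English description precedes it below -/
import Mathlib

section
/- For a > 0 and nonnegative integers l0, l1, l2, l3 with l = l0+l1+l2+l3, the integral ∫_{ℝ³} (x1²+x2²+x3²)^{l0/2} x1^{l1} x2^{l2} x3^{l3} e^{−a√(x1²+x2²+x3²)} dx equals 2 a^{−l−3} Γ(l+3) Γ(k1+1/2)Γ(k2+1/2)Γ(k3+1/2) / Γ(k1+k2+k3+3/2) if l1=2k1, l2=2k2, l3=2k3 are all even, and equals 0 if any of l1, l2, l3 is odd. -/
/-!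
In polar coordinates `x = r θ` the integrand splits as a homogeneous polynomial in `θ` times a
radial function, so the integral is a moment of the sphere measure times the one-dimensional
integral `∫₀^∞ r^(l+2) e^(-a r) dr = Γ(l+3) / a^(l+3)`. The sphere moment of
`θ₁^(2k₁) θ₂^(2k₂) θ₃^(2k₃)` is found by computing the Gaussian integral `∫ x^(2k) e^(-|x|²)`
twice: in Cartesian coordinates it factors into one-dimensional Gaussian moments `Γ(kᵢ + 1/2)`,
in polar coordinates it is the sphere moment times `Γ(k₁ + k₂ + k₃ + 3/2) / 2`. If some `lᵢ` is
odd, reflecting the `i`-th coordinate preserves the measure and changes the sign of the integrand.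
-/

open Real MeasureTheory Set Metric

section Polar

variable {E : Type*} [NormedAddCommGroup E] [NormedSpace ℝ E] [FiniteDimensional ℝ E]
  [MeasurableSpace E] [BorelSpace E] [Nontrivial E] (μ : Measure E) [μ.IsAddHaarMeasure]

theorem integral_mul_fun_norm_of_homogeneous {m : ℕ} {f : E → ℝ}
    (hf : ∀ c : ℝ, 0 < c → ∀ x, f (c • x) = c ^ m * f x) (g : ℝ → ℝ) :
    ∫ x, f x * g ‖x‖ ∂μ =
      (∫ θ, f θ ∂μ.toSphere) *
        ∫ r in Ioi (0 : ℝ), r ^ (m + (Module.finrank ℝ E - 1)) * g r := by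
  calc ∫ x, f x * g ‖x‖ ∂μ
      = ∫ x : ({0}ᶜ : Set E), f x * g ‖(x : E)‖ ∂μ.comap (↑) := by
        rw [integral_subtype_comap (measurableSet_singleton _).compl fun x ↦ f x * g ‖x‖,
          restrict_compl_singleton]
    _ = ∫ y : sphere (0 : E) 1 × Ioi (0 : ℝ), f y.1 * (y.2 ^ m * g y.2)
          ∂μ.toSphere.prod (.volumeIoiPow (Module.finrank ℝ E - 1)) := by
        rw [← μ.measurePreserving_homeomorphUnitSphereProd.integral_comp
          (Homeomorph.measurableEmbedding _)]
        refine integral_congr_ae (.of_forall fun x ↦ ?_)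
        have hx : 0 < ‖(x : E)‖ := norm_pos_iff.2 x.2
        -- `x = ‖x‖ • (‖x‖⁻¹ • x)` and `f` is homogeneous
        simp only [homeomorphUnitSphereProd_apply_fst_coe, homeomorphUnitSphereProd_apply_snd_coe,
          hf _ (inv_pos.2 hx), inv_pow]
        field_simp
    _ = (∫ θ, f θ ∂μ.toSphere) *
          ∫ r : Ioi (0 : ℝ), r ^ m * g r ∂.volumeIoiPow (Module.finrank ℝ E - 1) :=
        integral_prod_mul (fun θ : sphere (0 : E) 1 ↦ f θ) fun r : Ioi (0 : ℝ) ↦ r ^ m * g r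
    _ = _ := by
        simp only [Measure.volumeIoiPow, ENNReal.ofReal]
        rw [integral_withDensity_eq_integral_smul
            ((measurable_subtype_coe.pow_const _).real_toNNReal),
          integral_subtype_comap measurableSet_Ioi
            fun r ↦ (r ^ (Module.finrank ℝ E - 1)).toNNReal • (r ^ m * g r)]
        refine congrArg _ (setIntegral_congr_fun measurableSet_Ioi fun r hr ↦ ?_)
        rw [NNReal.smul_def, Real.coe_toNNReal _ (pow_nonneg (le_of_lt hr) _), smul_eq_mul,
          pow_add]
        ring

end Polar

theorem integral_Ioi_pow_mul_exp_neg_sq (n : ℕ) :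
    ∫ r in Ioi (0 : ℝ), r ^ n * exp (-r ^ 2) = Gamma ((n + 1) / 2) / 2 := by
  have h := integral_rpow_mul_exp_neg_rpow two_pos (q := n) (by linarith [n.cast_nonneg (α := ℝ)])
  simp only [rpow_natCast, rpow_two] at h
  rw [h]
  ring

theorem integral_pow_two_mul_mul_exp_neg_sq (k : ℕ) :
    ∫ t : ℝ, t ^ (2 * k) * exp (-t ^ 2) = Gamma (k + 1 / 2) := by
  have h_even : ∀ t : ℝ, t ^ (2 * k) * exp (-t ^ 2) = |t| ^ (2 * k) * exp (-|t| ^ 2) := by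
    simp [pow_mul]
  rw [funext h_even, integral_comp_abs (f := fun t ↦ t ^ (2 * k) * exp (-t ^ 2)),
    integral_Ioi_pow_mul_exp_neg_sq]
  push_cast
  ring_nf

theorem integral_Ioi_pow_mul_exp_neg_mul {a : ℝ} (ha : 0 < a) (n : ℕ) :
    ∫ r in Ioi (0 : ℝ), r ^ n * exp (-a * r) = Gamma (n + 1) / a ^ (n + 1) := by
  have h := integral_rpow_mul_exp_neg_mul_Ioi (a := n + 1) (by positivity) ha
  simp only [add_sub_cancel_right, rpow_natCast] at h
  simp_rw [neg_mul]
  rw [h, ← Nat.cast_add_one, rpow_natCast, one_div_pow, one_div_mul_eq_div]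

section Euclidean

variable {ι : Type*} [Fintype ι]

theorem prod_smul_apply_pow (l : ι → ℕ) (c : ℝ) (x : EuclideanSpace ℝ ι) :
    ∏ i, (c • x) i ^ l i = c ^ (∑ i, l i) * ∏ i, x i ^ l i := by
  simp only [PiLp.smul_apply, smul_eq_mul, mul_pow, Finset.prod_mul_distrib,
    Finset.prod_pow_eq_pow_sum]

theorem integral_prod_pow_two_mul_mul_exp_neg_norm_sq (k : ι → ℕ) :
    ∫ x : EuclideanSpace ℝ ι, (∏ i, x i ^ (2 * k i)) * exp (-‖x‖ ^ 2) =
      ∏ i, Gamma (k i + 1 / 2) := by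
  have h_split : ∀ x : EuclideanSpace ℝ ι,
      (∏ i, x i ^ (2 * k i)) * exp (-‖x‖ ^ 2) = ∏ i, x i ^ (2 * k i) * exp (-x i ^ 2) := by
    intro x
    simp only [EuclideanSpace.norm_sq_eq, norm_eq_abs, sq_abs, ← Finset.sum_neg_distrib,
      exp_sum, Finset.prod_mul_distrib]
  simp_rw [h_split]
  rw [← (PiLp.volume_preserving_toLp ι).integral_comp
    (MeasurableEquiv.toLp 2 _).measurableEmbedding,
    integral_fintype_prod_volume_eq_prod (fun i t ↦ t ^ (2 * k i) * exp (-t ^ 2))]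
  simp only [integral_pow_two_mul_mul_exp_neg_sq]

theorem integral_toSphere_prod_pow_two_mul [Nonempty ι] (k : ι → ℕ) :
    ∫ θ, ∏ i, (θ : EuclideanSpace ℝ ι) i ^ (2 * k i)
        ∂(volume : Measure (EuclideanSpace ℝ ι)).toSphere =
      2 * (∏ i, Gamma (k i + 1 / 2)) / Gamma (∑ i, k i + Fintype.card ι / 2) := by
  have h_polar := integral_mul_fun_norm_of_homogeneous volume
    (f := fun x : EuclideanSpace ℝ ι ↦ ∏ i, x i ^ (2 * k i))
    (fun c _ x ↦ prod_smul_apply_pow (fun i ↦ 2 * k i) c x) fun r ↦ exp (-r ^ 2)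
  rw [integral_prod_pow_two_mul_mul_exp_neg_norm_sq, integral_Ioi_pow_mul_exp_neg_sq,
    finrank_euclideanSpace] at h_polar
  have h_arg : ((∑ i, 2 * k i + (Fintype.card ι - 1) : ℕ) + 1 : ℝ) / 2 =
      ∑ i, k i + Fintype.card ι / 2 := by
    rw [← Nat.cast_add_one, add_assoc, Nat.sub_add_cancel Fintype.card_pos]
    push_cast [← Finset.mul_sum]
    ring
  rw [h_arg] at h_polar
  have hΓ : 0 < Gamma (∑ i, k i + Fintype.card ι / 2 : ℝ) := Gamma_pos_of_pos (by positivity)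
  rw [eq_div_iff hΓ.ne', h_polar]
  ring

theorem integral_prod_pow_two_mul_mul_norm_pow_mul_exp_neg_mul_norm [Nonempty ι] {a : ℝ}
    (ha : 0 < a) (l0 : ℕ) (k : ι → ℕ) :
    ∫ x : EuclideanSpace ℝ ι, (∏ i, x i ^ (2 * k i)) * (‖x‖ ^ l0 * exp (-a * ‖x‖)) =
      2 * (∏ i, Gamma (k i + 1 / 2)) / Gamma (∑ i, k i + Fintype.card ι / 2) *
        (Gamma (l0 + ∑ i, 2 * k i + Fintype.card ι : ℕ) /
          a ^ (l0 + ∑ i, 2 * k i + Fintype.card ι)) := by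
  have h_polar := integral_mul_fun_norm_of_homogeneous volume
    (f := fun x : EuclideanSpace ℝ ι ↦ ∏ i, x i ^ (2 * k i))
    (fun c _ x ↦ prod_smul_apply_pow (fun i ↦ 2 * k i) c x) fun r ↦ r ^ l0 * exp (-a * r)
  beta_reduce at h_polar
  rw [h_polar, integral_toSphere_prod_pow_two_mul, finrank_euclideanSpace]
  simp_rw [← mul_assoc, ← pow_add]
  rw [integral_Ioi_pow_mul_exp_neg_mul ha, ← Nat.cast_add_one]
  have h_exp : ∑ i, 2 * k i + (Fintype.card ι - 1) + l0 + 1 =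
      l0 + ∑ i, 2 * k i + Fintype.card ι := by
    have := Fintype.card_pos (α := ι)
    omega
  rw [h_exp]

theorem integral_prod_pow_mul_fun_norm_eq_zero [DecidableEq ι] (l : ι → ℕ) {i : ι}
    (hi : Odd (l i)) (g : ℝ → ℝ) :
    ∫ x : EuclideanSpace ℝ ι, (∏ j, x j ^ l j) * g ‖x‖ = 0 := by
  let T : EuclideanSpace ℝ ι ≃ₗᵢ[ℝ] EuclideanSpace ℝ ι := LinearIsometryEquiv.piLpCongrRight 2
    fun j ↦ if j = i then LinearIsometryEquiv.neg ℝ else LinearIsometryEquiv.refl ℝ ℝ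
  have hT : ∀ x, ∏ j, T x j ^ l j = -∏ j, x j ^ l j := by
    intro x
    have h_coord : ∀ j, T x j ^ l j = (if j = i then (-1) ^ l i else 1) * x j ^ l j := by
      intro j
      by_cases hj : j = i
      · subst hj
        simp [T, ← neg_pow]
      · simp [T, hj]
    simp only [h_coord, Finset.prod_mul_distrib, Finset.prod_ite_eq', Finset.mem_univ, if_true,
      hi.neg_one_pow, neg_one_mul]
  have h := integral_comp T fun x ↦ (∏ j, x j ^ l j) * g ‖x‖
  simp only [LinearIsometryEquiv.norm_map, hT, neg_mul, integral_neg] at h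
  linarith

end Euclidean

theorem integral_radial_monomial_eq_integral_euclideanSpace (a : ℝ) (l0 : ℕ) (l : Fin 3 → ℕ) :
    ∫ x : Fin 3 → ℝ, √(x 0 ^ 2 + x 1 ^ 2 + x 2 ^ 2) ^ l0 * x 0 ^ l 0 * x 1 ^ l 1 * x 2 ^ l 2 *
        exp (-a * √(x 0 ^ 2 + x 1 ^ 2 + x 2 ^ 2)) =
      ∫ x : EuclideanSpace ℝ (Fin 3), (∏ j, x j ^ l j) * (‖x‖ ^ l0 * exp (-a * ‖x‖)) := by
  rw [← (PiLp.volume_preserving_toLp (Fin 3)).integral_comp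
    (MeasurableEquiv.toLp 2 _).measurableEmbedding]
  congr 1 with x
  simp only [EuclideanSpace.norm_eq, norm_eq_abs, sq_abs, Fin.sum_univ_three, Fin.prod_univ_three]
  ring

/-- Proposition 2 of the paper: for `a > 0`,
`∫_{ℝ³} (x₁²+x₂²+x₃²)^{l₀/2} x₁^{l₁} x₂^{l₂} x₃^{l₃} e^{−a√(x₁²+x₂²+x₃²)} dx` equals
`2 a^{−l−3} Γ(l+3) Γ(k₁+½)Γ(k₂+½)Γ(k₃+½)/Γ(k₁+k₂+k₃+3/2)` when `lᵢ = 2kᵢ` are all even,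
and vanishes when some `lᵢ` (`i = 1,2,3`) is odd. -/
theorem integral_radial_monomial (a : ℝ) (ha : 0 < a) (l0 l1 l2 l3 : ℕ) :
    (∀ k1 k2 k3 : ℕ, l1 = 2 * k1 → l2 = 2 * k2 → l3 = 2 * k3 →
      (∫ x : Fin 3 → ℝ,
          Real.sqrt (x 0 ^ 2 + x 1 ^ 2 + x 2 ^ 2) ^ l0 *
            x 0 ^ l1 * x 1 ^ l2 * x 2 ^ l3 *
            Real.exp (-a * Real.sqrt (x 0 ^ 2 + x 1 ^ 2 + x 2 ^ 2))) =
        2 * a ^ (-(l0 + l1 + l2 + l3 : ℝ) - 3) *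
          Real.Gamma ((l0 + l1 + l2 + l3 : ℝ) + 3) *
          (Real.Gamma (k1 + 1 / 2) * Real.Gamma (k2 + 1 / 2) * Real.Gamma (k3 + 1 / 2) /
            Real.Gamma ((k1 + k2 + k3 : ℝ) + 3 / 2))) ∧
    ((Odd l1 ∨ Odd l2 ∨ Odd l3) →
      (∫ x : Fin 3 → ℝ,
          Real.sqrt (x 0 ^ 2 + x 1 ^ 2 + x 2 ^ 2) ^ l0 *
            x 0 ^ l1 * x 1 ^ l2 * x 2 ^ l3 *
            Real.exp (-a * Real.sqrt (x 0 ^ 2 + x 1 ^ 2 + x 2 ^ 2))) = 0) := by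
  refine ⟨fun k1 k2 k3 hl1 hl2 hl3 ↦ ?_, fun h_odd ↦ ?_⟩
  · subst hl1 hl2 hl3
    refine (integral_radial_monomial_eq_integral_euclideanSpace a l0
      fun j ↦ 2 * ![k1, k2, k3] j).trans ?_
    rw [integral_prod_pow_two_mul_mul_norm_pow_mul_exp_neg_mul_norm ha]
    simp only [Fin.sum_univ_three, Fin.prod_univ_three, Fintype.card_fin]
    push_cast
    have h_pow : a ^ (-(l0 + 2 * k1 + 2 * k2 + 2 * k3 : ℝ) - 3) =
        (a ^ (l0 + (2 * k1 + 2 * k2 + 2 * k3) + 3))⁻¹ := by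
      rw [← rpow_natCast, ← rpow_neg ha.le]
      push_cast
      ring_nf
    rw [h_pow]
    ring_nf
  · refine (integral_radial_monomial_eq_integral_euclideanSpace a l0 ![l1, l2, l3]).trans ?_
    obtain ⟨i, hi⟩ : ∃ i, Odd (![l1, l2, l3] i) := by
      rcases h_odd with h | h | h
      exacts [⟨0, h⟩, ⟨1, h⟩, ⟨2, h⟩]
    exact integral_prod_pow_mul_fun_norm_eq_zero _ hi fun r ↦ r ^ l0 * exp (-a * r)
end

section
/- Let f : ℝ⁸ → 𝕆 be differentiable with components f = Σⱼ₌₀⁷ fⱼ eⱼ. Then for every octonion constant α the function x ↦ f(αx) is left 𝕆-analytic (i.e., Σᵢ eᵢ ∂/∂xᵢ applied to it vanishes) if and only if the components satisfy: ∂f₀/∂x₀ = Σᵢ₌₁⁷ ∂fᵢ/∂xᵢ, ∂f₀/∂xᵢ = −∂fᵢ/∂x₀ for 1 ≤ i ≤ 7, and ∂fⱼ/∂x_k = ∂f_k/∂xⱼ for 1 ≤ j < k ≤ 7 (equivalently, the components of the conjugate f̄ form a Stein–Weiss conjugate harmonic system on ℝ⁸). -/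
/-!
The chain rule gives `∂ᵢ (f (α ·)) x = f'(α x) (α eᵢ)`, and left multiplication by a nonzero
octonion is onto (`a (ā y) = |a|² y`), so the left side says that `∑ᵢ eᵢ L (α eᵢ) = 0` for every
derivative `L = f'(x)` and every `α`. This is linear in `α`, so it suffices to take `α = e_j`.
In Cayley–Dickson coordinates these are 64 linear equations of rank 29 in the entries of the
matrix of `L`, and they cut out exactly the `L` for which `conj ∘ L` is symmetric and traceless,
which is the Stein–Weiss system for `f̄`.
-/

open scoped Quaternion

noncomputable section

def Octonion : Type := Quaternion ℝ × Quaternion ℝ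

namespace Octonion

instance : AddCommGroup Octonion := inferInstanceAs (AddCommGroup (Quaternion ℝ × Quaternion ℝ))
instance : Module ℝ Octonion := inferInstanceAs (Module ℝ (Quaternion ℝ × Quaternion ℝ))
instance : NormedAddCommGroup Octonion :=
  inferInstanceAs (NormedAddCommGroup (Quaternion ℝ × Quaternion ℝ))
instance : NormedSpace ℝ Octonion :=
  inferInstanceAs (NormedSpace ℝ (Quaternion ℝ × Quaternion ℝ))

def fst (x : Octonion) : Quaternion ℝ := Prod.fst x
def snd (x : Octonion) : Quaternion ℝ := Prod.snd x

instance : One Octonion := ⟨((1 : ℍ[ℝ]), (0 : ℍ[ℝ]))⟩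
instance : Mul Octonion :=
  ⟨fun x y => (fst x * fst y - star (snd y) * snd x, snd y * fst x + snd x * star (fst y))⟩

def conj (x : Octonion) : Octonion := (star (fst x), -(snd x))
def re (x : Octonion) : ℝ := (fst x).re
def normSq (x : Octonion) : ℝ := ‖fst x‖ ^ 2 + ‖snd x‖ ^ 2
def coord (x : Octonion) : Fin 8 → ℝ :=
  ![(fst x).re, (fst x).imI, (fst x).imJ, (fst x).imK,
    (snd x).re, (snd x).imI, (snd x).imJ, (snd x).imK]
def e (i : Fin 8) : Octonion :=
  let v : Fin 8 → ℝ := Pi.single i 1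
  ((⟨v 0, v 1, v 2, v 3⟩ : ℍ[ℝ]), (⟨v 4, v 5, v 6, v 7⟩ : ℍ[ℝ]))
def im (i : Fin 7) (x : Octonion) : ℝ := coord x i.succ
def et (t : Fin 7 → ℝ) : Octonion := ∑ i : Fin 7, t i • e i.succ

@[ext] lemma ext {x y : Octonion} (h₁ : fst x = fst y) (h₂ : snd x = snd y) : x = y :=
  Prod.ext h₁ h₂

@[simp] lemma fst_add (x y : Octonion) : fst (x + y) = fst x + fst y := rfl
@[simp] lemma snd_add (x y : Octonion) : snd (x + y) = snd x + snd y := rfl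
@[simp] lemma fst_smul (r : ℝ) (x : Octonion) : fst (r • x) = r • fst x := rfl
@[simp] lemma snd_smul (r : ℝ) (x : Octonion) : snd (r • x) = r • snd x := rfl
@[simp] lemma fst_mul (x y : Octonion) : fst (x * y) = fst x * fst y - star (snd y) * snd x := rfl
@[simp] lemma snd_mul (x y : Octonion) : snd (x * y) = snd y * fst x + snd x * star (fst y) := rfl
@[simp] lemma fst_conj (x : Octonion) : fst (conj x) = star (fst x) := rfl
@[simp] lemma snd_conj (x : Octonion) : snd (conj x) = -snd x := rfl

protected lemma mul_add (a b c : Octonion) : a * (b + c) = a * b + a * c := by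
  ext : 1 <;> simp only [fst_add, snd_add, fst_mul, snd_mul, star_add] <;> noncomm_ring

protected lemma add_mul (a b c : Octonion) : (a + b) * c = a * c + b * c := by
  ext : 1 <;> simp only [fst_add, snd_add, fst_mul, snd_mul] <;> noncomm_ring

protected lemma smul_mul (r : ℝ) (a b : Octonion) : (r • a) * b = r • (a * b) := by
  ext <;> simp [smul_sub, smul_add]

protected lemma mul_smul (r : ℝ) (a b : Octonion) : a * (r • b) = r • (a * b) := by
  ext <;> simp [smul_sub, smul_add]

def mulₗ : Octonion →ₗ[ℝ] Octonion →ₗ[ℝ] Octonion :=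
  LinearMap.mk₂ ℝ (· * ·) Octonion.add_mul Octonion.smul_mul Octonion.mul_add Octonion.mul_smul

@[simp] lemma mulₗ_apply (a b : Octonion) : mulₗ a b = a * b := rfl

@[simp] protected lemma zero_mul (a : Octonion) : 0 * a = 0 := by
  rw [← mulₗ_apply, map_zero, LinearMap.zero_apply]

@[simp] protected lemma mul_zero (a : Octonion) : a * 0 = 0 := by
  rw [← mulₗ_apply, map_zero]

instance : FiniteDimensional ℝ Octonion :=
  inferInstanceAs (FiniteDimensional ℝ (Quaternion ℝ × Quaternion ℝ))

def conjₗ : Octonion →ₗ[ℝ] Octonion where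
  toFun := conj
  map_add' _ _ := by ext <;> simp [add_comm]
  map_smul' _ _ := by ext <;> simp

@[simp] lemma conjₗ_apply (x : Octonion) : conjₗ x = conj x := rfl

lemma mul_conj_mul (a x : Octonion) : a * (conj a * x) = normSq a • x := by
  simp only [normSq, sq, ← Quaternion.normSq_eq_norm_mul_self]
  ext <;> simp [Quaternion.normSq_def'] <;> ring

lemma normSq_ne_zero {a : Octonion} (ha : a ≠ 0) : normSq a ≠ 0 := by
  contrapose! ha
  obtain ⟨h₁, h₂⟩ := (add_eq_zero_iff_of_nonneg (sq_nonneg _) (sq_nonneg _)).1 ha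
  exact ext (norm_eq_zero.1 (pow_eq_zero_iff two_ne_zero |>.1 h₁))
    (norm_eq_zero.1 (pow_eq_zero_iff two_ne_zero |>.1 h₂))

lemma mul_left_surjective {a : Octonion} (ha : a ≠ 0) : Function.Surjective (a * ·) := fun y ↦
  ⟨(normSq a)⁻¹ • (conj a * y), by
    simp only [Octonion.mul_smul, mul_conj_mul, smul_smul, inv_mul_cancel₀ (normSq_ne_zero ha),
      one_smul]⟩

def ofCoord (a : Fin 8 → ℝ) : Octonion :=
  ((⟨a 0, a 1, a 2, a 3⟩ : ℍ[ℝ]), (⟨a 4, a 5, a 6, a 7⟩ : ℍ[ℝ]))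

lemma fst_ofCoord (a : Fin 8 → ℝ) : fst (ofCoord a) = ⟨a 0, a 1, a 2, a 3⟩ := rfl
lemma snd_ofCoord (a : Fin 8 → ℝ) : snd (ofCoord a) = ⟨a 4, a 5, a 6, a 7⟩ := rfl

def coordEquiv : Octonion ≃ₗ[ℝ] (Fin 8 → ℝ) where
  toFun := coord
  invFun := ofCoord
  map_add' _ _ := by ext i; fin_cases i <;> rfl
  map_smul' _ _ := by ext i; fin_cases i <;> rfl
  left_inv _ := rfl
  right_inv _ := by ext i; fin_cases i <;> rfl

@[simp] lemma coordEquiv_apply (x : Octonion) : coordEquiv x = coord x := rfl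
@[simp] lemma coordEquiv_symm_apply (a : Fin 8 → ℝ) : coordEquiv.symm a = ofCoord a := rfl

lemma coord_ofCoord (a : Fin 8 → ℝ) : coord (ofCoord a) = a := coordEquiv.apply_symm_apply a

lemma ofCoord_add (a b : Fin 8 → ℝ) : ofCoord a + ofCoord b = ofCoord (a + b) := rfl

lemma ofCoord_eq_zero {a : Fin 8 → ℝ} : ofCoord a = 0 ↔ a = 0 := coordEquiv.symm.map_eq_zero_iff

lemma e_eq_ofCoord (i : Fin 8) : e i = ofCoord (Pi.single i 1) := rfl

lemma sum_coord_smul_e (x : Octonion) : ∑ k, coord x k • e k = x := by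
  simpa [e_eq_ofCoord, Module.Basis.map_apply] using
    ((Pi.basisFun ℝ (Fin 8)).map coordEquiv.symm).sum_repr x

lemma apply_ofCoord (L : Octonion →ₗ[ℝ] Octonion) (a : Fin 8 → ℝ) :
    L (ofCoord a) = ofCoord fun l ↦ ∑ k, a k * coord (L (e k)) l := by
  conv_lhs => rw [← sum_coord_smul_e (ofCoord a)]
  apply coordEquiv.injective
  ext l
  simp [coord_ofCoord]

/-- The Cayley–Dickson product `(p, q) (u, v) = (p u - v̄ q, v p + q ū)` in the basis `e`. -/
lemma ofCoord_mul_ofCoord (a b : Fin 8 → ℝ) : ofCoord a * ofCoord b = ofCoord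
    ![a 0*b 0 - a 1*b 1 - a 2*b 2 - a 3*b 3 - a 4*b 4 - a 5*b 5 - a 6*b 6 - a 7*b 7,
      a 0*b 1 + a 1*b 0 + a 2*b 3 - a 3*b 2 + a 4*b 5 - a 5*b 4 - a 6*b 7 + a 7*b 6,
      a 0*b 2 - a 1*b 3 + a 2*b 0 + a 3*b 1 + a 4*b 6 + a 5*b 7 - a 6*b 4 - a 7*b 5,
      a 0*b 3 + a 1*b 2 - a 2*b 1 + a 3*b 0 + a 4*b 7 - a 5*b 6 + a 6*b 5 - a 7*b 4,
      a 0*b 4 - a 1*b 5 - a 2*b 6 - a 3*b 7 + a 4*b 0 + a 5*b 1 + a 6*b 2 + a 7*b 3,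
      a 0*b 5 + a 1*b 4 - a 2*b 7 + a 3*b 6 - a 4*b 1 + a 5*b 0 - a 6*b 3 + a 7*b 2,
      a 0*b 6 + a 1*b 7 + a 2*b 4 - a 3*b 5 - a 4*b 2 + a 5*b 3 + a 6*b 0 - a 7*b 1,
      a 0*b 7 - a 1*b 6 + a 2*b 5 + a 3*b 4 - a 4*b 3 - a 5*b 2 + a 6*b 1 + a 7*b 0] := by
  ext <;>
    simp only [fst_mul, snd_mul, Quaternion.re_sub, Quaternion.imI_sub, Quaternion.imJ_sub,
      Quaternion.imK_sub, Quaternion.re_add, Quaternion.imI_add, Quaternion.imJ_add,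
      Quaternion.imK_add, Quaternion.re_mul, Quaternion.imI_mul, Quaternion.imJ_mul,
      Quaternion.imK_mul, Quaternion.re_star, Quaternion.imI_star, Quaternion.imJ_star,
      Quaternion.imK_star] <;>
    simp only [fst_ofCoord, snd_ofCoord, Matrix.cons_val] <;>
    ring

lemma coord_conj (x : Octonion) (j : Fin 8) :
    coord (conj x) j = if j = 0 then coord x j else -coord x j := by
  fin_cases j <;> simp [coord]

/-- The Stein–Weiss conditions `∑ ∂μᵢ/∂xᵢ = 0`, `∂μⱼ/∂xₖ = ∂μₖ/∂xⱼ` on a derivative `L`, read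
as `∂μⱼ/∂xₖ = coord (L (e k)) j`. -/
def IsSteinWeiss (L : Octonion →ₗ[ℝ] Octonion) : Prop :=
  ∑ i, coord (L (e i)) i = 0 ∧ ∀ j k, coord (L (e k)) j = coord (L (e j)) k

lemma isSteinWeiss_conjₗ_comp_iff (L : Octonion →ₗ[ℝ] Octonion) :
    IsSteinWeiss (conjₗ ∘ₗ L) ↔
      (coord (L (e 0)) 0 = ∑ i ∈ Finset.univ.erase 0, coord (L (e i)) i ∧
        (∀ i, i ≠ 0 → coord (L (e i)) 0 = -coord (L (e 0)) i) ∧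
        ∀ j k, j ≠ 0 → k ≠ 0 → coord (L (e k)) j = coord (L (e j)) k) := by
  simp only [IsSteinWeiss, LinearMap.comp_apply, conjₗ_apply, coord_conj]
  refine and_congr ?_ ⟨fun h ↦ ⟨fun i hi ↦ ?_, fun j k hj hk ↦ ?_⟩, fun ⟨h₀, h⟩ j k ↦ ?_⟩
  · rw [← Finset.add_sum_erase _ _ (Finset.mem_univ 0), if_pos rfl,
      Finset.sum_congr rfl fun i hi ↦ if_neg (Finset.ne_of_mem_erase hi), Finset.sum_neg_distrib,
      add_neg_eq_zero]
  · simpa [hi] using h 0 i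
  · simpa [hj, hk] using h j k
  · rcases eq_or_ne j 0 with rfl | hj <;> rcases eq_or_ne k 0 with rfl | hk
    · rfl
    · simp [hk, h₀ k hk]
    · simp [hj, h₀ j hj]
    · simp [hj, hk, h j k hj hk]

lemma sum_e_mul_apply_mul_e (L : Octonion →ₗ[ℝ] Octonion) (α : Octonion) :
    ∑ i, e i * L (α * e i) = ∑ j, coord α j • ∑ i, e i * L (e j * e i) := by
  conv_lhs => rw [← sum_coord_smul_e α]
  simp only [← mulₗ_apply, map_sum, map_smul, LinearMap.sum_apply, LinearMap.smul_apply,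
    Finset.smul_sum]
  exact Finset.sum_comm

set_option maxHeartbeats 1000000 in
lemma forall_sum_e_mul_apply_e_mul_eq_zero_iff_isSteinWeiss (L : Octonion →ₗ[ℝ] Octonion) :
    (∀ j, ∑ i, e i * L (e j * e i) = 0) ↔ IsSteinWeiss (conjₗ ∘ₗ L) := by
  obtain ⟨M, hM⟩ : ∃ M : Fin 8 → Fin 8 → ℝ, ∀ k l, coord (L (e k)) l = M k l := ⟨_, fun _ _ ↦ rfl⟩
  have hL (a : Fin 8 → ℝ) : L (ofCoord a) = ofCoord fun l ↦ ∑ k, a k * M k l := by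
    simp only [apply_ofCoord, hM]
  simp only [IsSteinWeiss, LinearMap.comp_apply, conjₗ_apply, coord_conj, hM]
  simp only [Fin.sum_univ_eight, e_eq_ofCoord, ofCoord_mul_ofCoord, hL, ofCoord_add,
    ofCoord_eq_zero]
  simp only [Fin.isValue, Pi.single_eq_same, Pi.single_apply, Fin.reduceEq, ↓reduceIte,
    Fin.forall_fin_succ, Fin.succ_zero_eq_one, Fin.succ_one_eq_two, Fin.reduceSucc,
    Fin.succ_ne_zero, IsEmpty.forall_iff, forall_const, funext_iff, Pi.zero_apply,
    Matrix.cons_val_zero, Matrix.cons_val_one, Matrix.cons_val, Matrix.cons_val_succ,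
    Matrix.cons_val_fin_one, Matrix.add_cons, Matrix.head_cons, Matrix.tail_cons,
    Matrix.empty_add_empty, Nat.succ_eq_add_one, Nat.reduceAdd, ite_mul, one_mul, zero_mul,
    mul_one, mul_zero, one_ne_zero, zero_ne_one, zero_add, add_zero, sub_zero, zero_sub, sub_self,
    neg_mul, neg_add_rev, neg_neg, neg_zero, neg_inj, and_true, true_and]
  constructor <;> intro h <;> casesm* _ ∧ _ <;> constructorm* _ ∧ _ <;> grind

lemma forall_sum_e_mul_apply_mul_e_eq_zero_iff (L : Octonion →ₗ[ℝ] Octonion) :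
    (∀ α, ∑ i, e i * L (α * e i) = 0) ↔
      (coord (L (e 0)) 0 = ∑ i ∈ Finset.univ.erase 0, coord (L (e i)) i ∧
        (∀ i, i ≠ 0 → coord (L (e i)) 0 = -coord (L (e 0)) i) ∧
        ∀ j k, j ≠ 0 → k ≠ 0 → coord (L (e k)) j = coord (L (e j)) k) := by
  rw [← isSteinWeiss_conjₗ_comp_iff, ← forall_sum_e_mul_apply_e_mul_eq_zero_iff_isSteinWeiss]
  refine ⟨fun h j ↦ h (e j), fun h α ↦ ?_⟩
  simp [sum_e_mul_apply_mul_e, h]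

lemma fderiv_comp_mul_left_apply {f : Octonion → Octonion} {α x : Octonion}
    (hf : DifferentiableAt ℝ f (α * x)) (v : Octonion) :
    fderiv ℝ (fun y ↦ f (α * y)) x v = fderiv ℝ f (α * x) (α * v) := by
  let mulLeft := (mulₗ α).toContinuousLinearMap
  have h : HasFDerivAt (f ∘ mulLeft) ((fderiv ℝ f (α * x)).comp mulLeft) x :=
    hf.hasFDerivAt.comp x mulLeft.hasFDerivAt
  rw [show (fun y ↦ f (α * y)) = f ∘ mulLeft from rfl, h.fderiv]
  rfl

/-- Proposition 4.7: for a differentiable `f : ℝ⁸ = 𝕆 → 𝕆` with components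
`fⱼ = coord j ∘ f`, the function `x ↦ f(αx)` is left 𝕆-analytic for every octonion
constant `α` if and only if the components satisfy `∂f₀/∂x₀ = Σᵢ₌₁⁷ ∂fᵢ/∂xᵢ`,
`∂f₀/∂xᵢ = −∂fᵢ/∂x₀` (`1 ≤ i ≤ 7`) and `∂fⱼ/∂x_k = ∂f_k/∂xⱼ` (`1 ≤ j,k ≤ 7`),
i.e. the components of `f̄` form a Stein–Weiss conjugate harmonic system on ℝ⁸.
Here `∂fⱼ/∂xᵢ = coord j (fderiv ℝ f x (e i))`. -/
theorem leftAnalytic_comp_iff_steinWeiss (f : Octonion → Octonion)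
    (hf : Differentiable ℝ f) :
    (∀ α : Octonion, ∀ x : Octonion,
        (∑ i : Fin 8, e i * fderiv ℝ (fun y => f (α * y)) x (e i)) = 0) ↔
    (∀ x : Octonion,
        coord (fderiv ℝ f x (e 0)) 0 =
          (∑ i ∈ Finset.univ.erase (0 : Fin 8), coord (fderiv ℝ f x (e i)) i) ∧
        (∀ i : Fin 8, i ≠ 0 →
          coord (fderiv ℝ f x (e i)) 0 = -coord (fderiv ℝ f x (e 0)) i) ∧
        (∀ j k : Fin 8, j ≠ 0 → k ≠ 0 →
          coord (fderiv ℝ f x (e k)) j = coord (fderiv ℝ f x (e j)) k)) := by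
  simp only [fderiv_comp_mul_left_apply (hf _)]
  refine ⟨fun H x ↦ (forall_sum_e_mul_apply_mul_e_eq_zero_iff (fderiv ℝ f x)).1 fun α ↦ ?_,
    fun H α x ↦ (forall_sum_e_mul_apply_mul_e_eq_zero_iff (fderiv ℝ f (α * x))).2 (H (α * x)) α⟩
  rcases eq_or_ne α 0 with rfl | hα
  · simp
  · obtain ⟨y, rfl⟩ := mul_left_surjective hα x
    exact H α y

end Octonion
end
end

section
/- Suppose F : ℍ × ℍ → ℍ is C¹ and left ℍ-regular separately in each variable q₁ and q₂ (i.e., D_{q₁}F = 0 and D_{q₂}F = 0). Then for any quaternionic constant α, the function f(q₁) := F(q₁, αq₁) is left ℍ-regular in q₁. -/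
/-! By the chain rule, the derivative of `f(q) = F(q, αq)` is `∂₁F + ∂₂F ∘ (α ·)`. For every
real-linear `L : ℍ → ℍ` one has `Σᵢ eᵢ L(α eᵢ) = ᾱ Σᵢ eᵢ L(eᵢ)`, so `Df = D₁F + ᾱ D₂F = 0`. -/

open scoped Quaternion

noncomputable section

/-- The standard real basis `1, e₁, e₂, e₃` of the quaternions. -/
def qe : Fin 4 → ℍ[ℝ] := ![1, ⟨0, 1, 0, 0⟩, ⟨0, 0, 1, 0⟩, ⟨0, 0, 0, 1⟩]

/-- The Dirac (Cauchy–Riemann–Fueter) operator `D = Σᵢ eᵢ ∂/∂xᵢ` applied to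
`g : ℍ → ℍ` at the point `x`. -/
def quatDirac (g : ℍ[ℝ] → ℍ[ℝ]) (x : ℍ[ℝ]) : ℍ[ℝ] :=
  ∑ i : Fin 4, qe i * fderiv ℝ g x (qe i)

/-- A `C¹` function is left `ℍ`-regular on a set if its Fueter–Dirac derivative vanishes. -/
def LeftRegular (g : ℍ[ℝ] → ℍ[ℝ]) : Prop := ∀ x, quatDirac g x = 0

theorem fderiv_comp_prodMk_clm {𝕜 E E' G : Type*} [NontriviallyNormedField 𝕜]
    [NormedAddCommGroup E] [NormedSpace 𝕜 E] [NormedAddCommGroup E'] [NormedSpace 𝕜 E']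
    [NormedAddCommGroup G] [NormedSpace 𝕜 G] {F : E × E' → G} {A : E →L[𝕜] E'} {x : E}
    (hF : DifferentiableAt 𝕜 F (x, A x)) :
    fderiv 𝕜 (fun q => F (q, A q)) x =
      fderiv 𝕜 (fun q => F (q, A x)) x + (fderiv 𝕜 (fun q => F (x, q)) (A x)).comp A := by
  set D := fderiv 𝕜 F (x, A x)
  have hD : HasFDerivAt F D (x, A x) := hF.hasFDerivAt
  have hline :
      HasFDerivAt (fun q => F (q, A q)) (D.comp ((ContinuousLinearMap.id 𝕜 E).prod A)) x :=
    hD.comp x ((hasFDerivAt_id x).prodMk A.hasFDerivAt)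
  have hleft : HasFDerivAt (fun q => F (q, A x)) (D.comp (.inl 𝕜 E E')) x :=
    hD.comp x (hasFDerivAt_prodMk_left x (A x))
  have hright : HasFDerivAt (fun q => F (x, q)) (D.comp (.inr 𝕜 E E')) (A x) :=
    hD.comp (A x) (hasFDerivAt_prodMk_right x (A x))
  rw [hline.fderiv, hleft.fderiv, hright.fderiv]
  ext v
  simp [← map_add]

theorem quat_eq_sum_qe (q : ℍ[ℝ]) :
    q = q.re • qe 0 + q.imI • qe 1 + q.imJ • qe 2 + q.imK • qe 3 := by
  ext <;> simp only [Quaternion.re_smul, Quaternion.imI_smul, Quaternion.imJ_smul,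
    Quaternion.imK_smul, Quaternion.re_add, Quaternion.imI_add, Quaternion.imJ_add,
    Quaternion.imK_add] <;> simp [qe]

def diracSymbol (L : ℍ[ℝ] →L[ℝ] ℍ[ℝ]) : ℍ[ℝ] := ∑ i : Fin 4, qe i * L (qe i)

theorem quatDirac_eq_diracSymbol (g : ℍ[ℝ] → ℍ[ℝ]) (x : ℍ[ℝ]) :
    quatDirac g x = diracSymbol (fderiv ℝ g x) := rfl

theorem diracSymbol_add (L M : ℍ[ℝ] →L[ℝ] ℍ[ℝ]) :
    diracSymbol (L + M) = diracSymbol L + diracSymbol M := by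
  simp only [diracSymbol, add_apply, mul_add, Finset.sum_add_distrib]

theorem diracSymbol_comp_mul (L : ℍ[ℝ] →L[ℝ] ℍ[ℝ]) (α : ℍ[ℝ]) :
    diracSymbol (L.comp (ContinuousLinearMap.mul ℝ ℍ[ℝ] α)) = star α * diracSymbol L := by
  have hL (p : ℍ[ℝ]) :
      L p = p.re • L (qe 0) + p.imI • L (qe 1) + p.imJ • L (qe 2) + p.imK • L (qe 3) := by
    conv_lhs => rw [quat_eq_sum_qe p]
    simp only [map_add, map_smul]
  simp only [diracSymbol, ContinuousLinearMap.comp_apply, ContinuousLinearMap.mul_apply',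
    Fin.sum_univ_four, hL (α * qe _)]
  generalize L (qe 0) = a₀, L (qe 1) = a₁, L (qe 2) = a₂, L (qe 3) = a₃
  ext <;>
    simp only [Quaternion.re_mul, Quaternion.imI_mul, Quaternion.imJ_mul, Quaternion.imK_mul,
      Quaternion.re_add, Quaternion.imI_add, Quaternion.imJ_add, Quaternion.imK_add,
      Quaternion.re_smul, Quaternion.imI_smul, Quaternion.imJ_smul, Quaternion.imK_smul,
      Quaternion.re_star, Quaternion.imI_star, Quaternion.imJ_star, Quaternion.imK_star] <;>
    simp [qe] <;> ring

/-- Proposition 4.5: if `F(q₁,q₂)` is `C¹` and left `ℍ`-regular separately in each of the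
two quaternionic variables, then for any quaternionic constant `α` the function
`q₁ ↦ F(q₁, α q₁)` is left `ℍ`-regular. -/
theorem regular_along_quaternionic_line
    (F : ℍ[ℝ] × ℍ[ℝ] → ℍ[ℝ]) (hF : ContDiff ℝ 1 F)
    (h1 : ∀ q2 : ℍ[ℝ], LeftRegular fun q1 => F (q1, q2))
    (h2 : ∀ q1 : ℍ[ℝ], LeftRegular fun q2 => F (q1, q2)) (α : ℍ[ℝ]) :
    LeftRegular fun q1 => F (q1, α * q1) := by
  intro x
  have hchain := fderiv_comp_prodMk_clm (A := ContinuousLinearMap.mul ℝ ℍ[ℝ] α)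
    (hF.differentiable one_ne_zero (x, α * x))
  simp only [ContinuousLinearMap.mul_apply'] at hchain
  rw [quatDirac_eq_diracSymbol, hchain, diracSymbol_add, diracSymbol_comp_mul,
    ← quatDirac_eq_diracSymbol, ← quatDirac_eq_diracSymbol, h1 (α * x) x, h2 x (α * x),
    mul_zero, add_zero]

end
end
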